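/- arXiv:2405.10677 — 8 statements merged into one kernel-verified Lean document; each statement's English description precedes it below -/
import Mathlib

section
/- Averaging property: if I is a conditional indicator w.r.t. H defined on an H-decomposable domain, then for all X in the domain and all H-measurable sets A, I(X·1_A)·1_{A^c} = 0 a.s., and hence I(X·1_A) = I(X·1_A)·1_A a.s. -/
/-!
Since `A ∈ H`, patching `esssup_H(X·1_A)` by `0` off `A` gives another `H`-measurable
dominant of `X·1_A`, so by minimality `esssup_H(X·1_A) ≤ 0` off `A`; dually
`essinf_H(X·1_A) ≥ 0` there, and `I(X·1_A)` is squeezed between the two.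
-/

open MeasureTheory Filter Set
open scoped ENNReal Classical

noncomputable section

variable {Ω : Type*}

/-- `S` is the conditional essential supremum of the family `Γ` of extended-real-valued
random variables, given the sub-σ-algebra `m`: `S` is `m`-measurable, a.e. dominates every
member of `Γ`, and is minimal among `m`-measurable a.e. dominants. -/
def IsCondSup {F : MeasurableSpace Ω} (μ : Measure Ω) (m : MeasurableSpace Ω)
    (Γ : Set (Ω → EReal)) (S : Ω → EReal) : Prop :=
  Measurable[m] S ∧ (∀ Y ∈ Γ, ∀ᵐ ω ∂μ, Y ω ≤ S ω) ∧
    ∀ T : Ω → EReal, Measurable[m] T → (∀ Y ∈ Γ, ∀ᵐ ω ∂μ, Y ω ≤ T ω) →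
      ∀ᵐ ω ∂μ, S ω ≤ T ω

/-- `S` is the conditional essential infimum of the family `Γ` given `m`. -/
def IsCondInf {F : MeasurableSpace Ω} (μ : Measure Ω) (m : MeasurableSpace Ω)
    (Γ : Set (Ω → EReal)) (S : Ω → EReal) : Prop :=
  Measurable[m] S ∧ (∀ Y ∈ Γ, ∀ᵐ ω ∂μ, S ω ≤ Y ω) ∧
    ∀ T : Ω → EReal, Measurable[m] T → (∀ Y ∈ Γ, ∀ᵐ ω ∂μ, T ω ≤ Y ω) →
      ∀ᵐ ω ∂μ, T ω ≤ S ω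

section CondSupInf

variable {F : MeasurableSpace Ω} {μ : Measure Ω} {m : MeasurableSpace Ω}
  {Γ : Set (Ω → EReal)} {S : Ω → EReal} {A : Set Ω} {c : EReal}

theorem IsCondSup.ae_le_of_ae_le_off (hS : IsCondSup μ m Γ S) (hA : MeasurableSet[m] A)
    (hΓ : ∀ Y ∈ Γ, ∀ᵐ ω ∂μ, ω ∉ A → Y ω ≤ c) : ∀ᵐ ω ∂μ, ω ∉ A → S ω ≤ c := by
  obtain ⟨hSm, hSdom, hSmin⟩ := hS
  -- `S` patched to `c` off `A` is still an `m`-measurable dominant of `Γ`.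
  have hpatch := hSmin (fun ω => if ω ∈ A then S ω else c) (hSm.ite hA measurable_const)
    fun Y hY => by
      filter_upwards [hSdom Y hY, hΓ Y hY] with ω hSω hcω
      by_cases hω : ω ∈ A <;> simp [hω, hSω, hcω]
  filter_upwards [hpatch] with ω hω hωA
  simpa [hωA] using hω

theorem IsCondInf.ae_le_of_ae_le_off (hS : IsCondInf μ m Γ S) (hA : MeasurableSet[m] A)
    (hΓ : ∀ Y ∈ Γ, ∀ᵐ ω ∂μ, ω ∉ A → c ≤ Y ω) : ∀ᵐ ω ∂μ, ω ∉ A → c ≤ S ω := by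
  obtain ⟨hSm, hSdom, hSmin⟩ := hS
  have hpatch := hSmin (fun ω => if ω ∈ A then S ω else c) (hSm.ite hA measurable_const)
    fun Y hY => by
      filter_upwards [hSdom Y hY, hΓ Y hY] with ω hSω hcω
      by_cases hω : ω ∈ A <;> simp [hω, hSω, hcω]
  filter_upwards [hpatch] with ω hω hωA
  simpa [hωA] using hω

end CondSupInf

theorem conditional_indicator_averaging_general
    {F : MeasurableSpace Ω} (μ : Measure Ω) (H : MeasurableSpace Ω)
    (D : Set (Ω → EReal)) (h0D : (0 : Ω → EReal) ∈ D)
    (hdec : ∀ A : Set Ω, MeasurableSet[H] A → ∀ X ∈ D, ∀ Y ∈ D,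
      (fun ω => if ω ∈ A then X ω else Y ω) ∈ D)
    (I : (Ω → EReal) → Ω → EReal)
    (hbdd : ∀ X ∈ D, ∃ einf esup : Ω → EReal,
      IsCondInf μ H {X} einf ∧ IsCondSup μ H {X} esup ∧
        ∀ᵐ ω ∂μ, einf ω ≤ I X ω ∧ I X ω ≤ esup ω)
    (X : Ω → EReal) (hX : X ∈ D) (A : Set Ω) (hA : MeasurableSet[H] A) :
    (∀ᵐ ω ∂μ, ω ∉ A → I (A.indicator X) ω = 0) ∧
      I (A.indicator X) =ᵐ[μ] A.indicator (I (A.indicator X)) := by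
  have hXA : A.indicator X ∈ D := hdec A hA X hX 0 h0D
  obtain ⟨einf, esup, hinf, hsup, hI⟩ := hbdd _ hXA
  have hoff : ∀ Y ∈ ({A.indicator X} : Set (Ω → EReal)), ∀ᵐ ω ∂μ, ω ∉ A → Y ω = 0 :=
    fun Y hY => by simp_all
  have hsup0 := hsup.ae_le_of_ae_le_off hA fun Y hY => by
    filter_upwards [hoff Y hY] with ω h hω using (h hω).le
  have hinf0 := hinf.ae_le_of_ae_le_off hA fun Y hY => by
    filter_upwards [hoff Y hY] with ω h hω using (h hω).ge
  have hzero : ∀ᵐ ω ∂μ, ω ∉ A → I (A.indicator X) ω = 0 := by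
    filter_upwards [hsup0, hinf0, hI] with ω hsω hiω ⟨hlo, hhi⟩ hω
    exact le_antisymm (hhi.trans (hsω hω)) ((hiω hω).trans hlo)
  refine ⟨hzero, ?_⟩
  filter_upwards [hzero] with ω hω
  by_cases hωA : ω ∈ A
  · rw [indicator_of_mem hωA]
  · rw [indicator_of_notMem hωA, hω hωA]

/-- Averaging property: if `I` is a conditional indicator w.r.t. `H` on an
`H`-decomposable domain, then for all `X` in the domain and `A ∈ H`,
`I(X·1_A)·1_{A^c} = 0` a.e., hence `I(X·1_A) = I(X·1_A)·1_A` a.e. -/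
theorem conditional_indicator_averaging
    {F : MeasurableSpace Ω} (μ : Measure Ω) (H : MeasurableSpace Ω) (hH : H ≤ F)
    (D : Set (Ω → EReal)) (h0D : (0 : Ω → EReal) ∈ D)
    (hDstable : ∀ X ∈ D, ∀ Z : Ω → EReal, Measurable[H] Z → X + Z ∈ D)
    (hdec : ∀ A : Set Ω, MeasurableSet[H] A → ∀ X ∈ D, ∀ Y ∈ D,
      (fun ω => if ω ∈ A then X ω else Y ω) ∈ D)
    (I : (Ω → EReal) → Ω → EReal)
    (hmeasI : ∀ X ∈ D, Measurable[H] (I X))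
    (hbdd : ∀ X ∈ D, ∃ einf esup : Ω → EReal,
      IsCondInf μ H {X} einf ∧ IsCondSup μ H {X} esup ∧
        ∀ᵐ ω ∂μ, einf ω ≤ I X ω ∧ I X ω ≤ esup ω)
    (X : Ω → EReal) (hX : X ∈ D) (A : Set Ω) (hA : MeasurableSet[H] A) :
    (∀ᵐ ω ∂μ, ω ∉ A → I (A.indicator X) ω = 0) ∧
      I (A.indicator X) =ᵐ[μ] A.indicator (I (A.indicator X)) :=
  conditional_indicator_averaging_general (F := F) μ H D h0D hdec I hbdd X hX A hA
end
end

section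
/- If a conditional indicator I is regular and H-positively-homogeneous, then for all X in its domain and all real-valued H-measurable h, I(hX) = h⁺·I(X) + h⁻·I(−X) a.s. -/
open MeasureTheory Filter Set
open scoped ENNReal Classical

noncomputable section

variable {Ω : Type*}

/-! On `{0 ≤ h}` the product `h X` equals `h⁺ X`, and on its complement it equals `h⁻ (−X)`.
Regularity localises `I` to each of these `H`-measurable pieces, positive homogeneity evaluates
it there, and the two pieces add up to `I (h X)`. -/

theorem indicator_nonneg_mul_eq_posPart_mul (h : Ω → ℝ) (X : Ω → EReal) :
    {ω | 0 ≤ h ω}.indicator (fun ω => (h ω : EReal) * X ω) =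
      fun ω => ((max (h ω) 0 : ℝ) : EReal) * X ω := by
  funext ω
  by_cases hω : 0 ≤ h ω
  · simp [hω]
  · simp [hω, max_eq_right (not_le.mp hω).le]

theorem indicator_neg_mul_eq_negPart_mul_neg (h : Ω → ℝ) (X : Ω → EReal) :
    {ω | 0 ≤ h ω}ᶜ.indicator (fun ω => (h ω : EReal) * X ω) =
      fun ω => ((max (-h ω) 0 : ℝ) : EReal) * -X ω := by
  funext ω
  by_cases hω : 0 ≤ h ω
  · simp [hω]
  · have hneg : max (-h ω) 0 = -h ω := max_eq_left (neg_nonneg.mpr (not_le.mp hω).le)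
    simp [hω, hneg, EReal.coe_neg]

theorem eventuallyEq_add_of_indicator_of_indicator_compl {M : Type*} [AddMonoid M]
    {l : Filter Ω} {A : Set Ω} {f g k : Ω → M}
    (hA : A.indicator f =ᶠ[l] g) (hAc : Aᶜ.indicator f =ᶠ[l] k) : f =ᶠ[l] g + k := by
  rw [← A.indicator_self_add_compl f]
  exact hA.add hAc

theorem conditional_indicator_signed_homogeneous_general
    {F : MeasurableSpace Ω} (μ : Measure Ω) (H : MeasurableSpace Ω)
    (D : Set (Ω → EReal))
    (hnegD : ∀ X ∈ D, (fun ω => -X ω) ∈ D)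
    (I : (Ω → EReal) → Ω → EReal)
    (hreg : ∀ X ∈ D, ∀ A : Set Ω, MeasurableSet[H] A →
      I (A.indicator X) =ᵐ[μ] A.indicator (I X))
    (hposhom : ∀ α : Ω → ℝ, Measurable[H] α → (∀ ω, 0 ≤ α ω) → ∀ X ∈ D,
      (fun ω => (α ω : EReal) * X ω) ∈ D ∧
        I (fun ω => (α ω : EReal) * X ω) =ᵐ[μ] fun ω => (α ω : EReal) * I X ω)
    (X : Ω → EReal) (hX : X ∈ D)
    (h : Ω → ℝ) (hh : Measurable[H] h)
    (hhX : (fun ω => (h ω : EReal) * X ω) ∈ D) :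
    I (fun ω => (h ω : EReal) * X ω) =ᵐ[μ]
      fun ω => ((max (h ω) 0 : ℝ) : EReal) * I X ω +
        ((max (-h ω) 0 : ℝ) : EReal) * I (fun ω' => -X ω') ω := by
  have hA : MeasurableSet[H] {ω | 0 ≤ h ω} := measurableSet_le measurable_const hh
  have hpos := (hposhom _ (hh.max measurable_const) (fun _ => le_max_right _ _) X hX).2
  have hneg := (hposhom _ (hh.neg.max measurable_const) (fun _ => le_max_right _ _) _
    (hnegD X hX)).2
  refine eventuallyEq_add_of_indicator_of_indicator_compl (A := {ω | 0 ≤ h ω}) ?_ ?_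
  · refine (hreg _ hhX _ hA).symm.trans ?_
    rwa [indicator_nonneg_mul_eq_posPart_mul]
  · refine (hreg _ hhX _ hA.compl).symm.trans ?_
    rwa [indicator_neg_mul_eq_negPart_mul_neg]

/-- If a conditional indicator `I` is regular and `H`-positively-homogeneous,
then for all `X` in its domain and all real-valued `H`-measurable `h`,
`I(hX) = h⁺·I(X) + h⁻·I(−X)` a.e. -/
theorem conditional_indicator_signed_homogeneous
    {F : MeasurableSpace Ω} (μ : Measure Ω) (H : MeasurableSpace Ω) (hH : H ≤ F)
    (D : Set (Ω → EReal)) (h0D : (0 : Ω → EReal) ∈ D)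
    (hDstable : ∀ X ∈ D, ∀ Z : Ω → EReal, Measurable[H] Z → X + Z ∈ D)
    (hdec : ∀ A : Set Ω, MeasurableSet[H] A → ∀ X ∈ D, ∀ Y ∈ D,
      (fun ω => if ω ∈ A then X ω else Y ω) ∈ D)
    (hnegD : ∀ X ∈ D, (fun ω => -X ω) ∈ D)
    (I : (Ω → EReal) → Ω → EReal)
    (hmeasI : ∀ X ∈ D, Measurable[H] (I X))
    (hbdd : ∀ X ∈ D, ∃ einf esup : Ω → EReal,
      IsCondInf μ H {X} einf ∧ IsCondSup μ H {X} esup ∧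
        ∀ᵐ ω ∂μ, einf ω ≤ I X ω ∧ I X ω ≤ esup ω)
    (hreg : ∀ X ∈ D, ∀ A : Set Ω, MeasurableSet[H] A →
      I (A.indicator X) =ᵐ[μ] A.indicator (I X))
    (hposhom : ∀ α : Ω → ℝ, Measurable[H] α → (∀ ω, 0 ≤ α ω) → ∀ X ∈ D,
      (fun ω => (α ω : EReal) * X ω) ∈ D ∧
        I (fun ω => (α ω : EReal) * X ω) =ᵐ[μ] fun ω => (α ω : EReal) * I X ω)
    (X : Ω → EReal) (hX : X ∈ D)
    (h : Ω → ℝ) (hh : Measurable[H] h)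
    (hhX : (fun ω => (h ω : EReal) * X ω) ∈ D) :
    I (fun ω => (h ω : EReal) * X ω) =ᵐ[μ]
      fun ω => ((max (h ω) 0 : ℝ) : EReal) * I X ω +
        ((max (-h ω) 0 : ℝ) : EReal) * I (fun ω' => -X ω') ω :=
  conditional_indicator_signed_homogeneous_general (F := F) μ H D hnegD I hreg hposhom X hX h hh hhX
end
end

section
/- Every conditionally convex conditional indicator on an H-decomposable domain is regular: if I(α X + (1−α) Y) ≤ α I(X) + (1−α) I(Y) for all H-measurable α with values in [0,1], then I(X·1_A) = I(X)·1_A for all A ∈ H. -/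
open MeasureTheory Filter Set
open scoped ENNReal Classical

noncomputable section

variable {Ω : Type*}

/-- Every conditionally convex conditional indicator on an `H`-decomposable
domain is regular: `I(X·1_A) = I(X)·1_A` a.e. for all `A ∈ H`. -/
theorem conditionally_convex_implies_regular
    {F : MeasurableSpace Ω} (μ : Measure Ω) (H : MeasurableSpace Ω) (hH : H ≤ F)
    (D : Set (Ω → EReal)) (h0D : (0 : Ω → EReal) ∈ D)
    (hDstable : ∀ X ∈ D, ∀ Z : Ω → EReal, Measurable[H] Z → X + Z ∈ D)
    (hdec : ∀ A : Set Ω, MeasurableSet[H] A → ∀ X ∈ D, ∀ Y ∈ D,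
      (fun ω => if ω ∈ A then X ω else Y ω) ∈ D)
    (I : (Ω → EReal) → Ω → EReal)
    (hmeasI : ∀ X ∈ D, Measurable[H] (I X))
    (hbdd : ∀ X ∈ D, ∃ einf esup : Ω → EReal,
      IsCondInf μ H {X} einf ∧ IsCondSup μ H {X} esup ∧
        ∀ᵐ ω ∂μ, einf ω ≤ I X ω ∧ I X ω ≤ esup ω)
    (hconvD : ∀ α : Ω → ℝ, Measurable[H] α → (∀ ω, α ω ∈ Set.Icc (0:ℝ) 1) →
      ∀ X ∈ D, ∀ Y ∈ D, (fun ω => (α ω : EReal) * X ω + ((1 - α ω : ℝ) : EReal) * Y ω) ∈ D)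
    (hconv : ∀ α : Ω → ℝ, Measurable[H] α → (∀ ω, α ω ∈ Set.Icc (0:ℝ) 1) →
      ∀ X ∈ D, ∀ Y ∈ D,
        ∀ᵐ ω ∂μ, I (fun ω' => (α ω' : EReal) * X ω' + ((1 - α ω' : ℝ) : EReal) * Y ω') ω ≤
          (α ω : EReal) * I X ω + ((1 - α ω : ℝ) : EReal) * I Y ω)
    (X : Ω → EReal) (hX : X ∈ D) (A : Set Ω) (hA : MeasurableSet[H] A) :
    I (A.indicator X) =ᵐ[μ] A.indicator (I X) := by
  classical
  set α : Ω → ℝ := fun ω => if ω ∈ A then 1 else 0 with hαdef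
  have hαm : Measurable[H] α := Measurable.ite hA measurable_const measurable_const
  have hαIcc : ∀ ω, α ω ∈ Set.Icc (0:ℝ) 1 := by
    intro ω; by_cases h : ω ∈ A <;> simp [hαdef, h]
  set XA : Ω → EReal := fun ω => if ω ∈ A then X ω else 0 with hXAdef
  set XAc : Ω → EReal := fun ω => if ω ∈ A then 0 else X ω with hXAcdef
  have hXA : XA ∈ D := by
    have := hdec A hA X hX 0 h0D
    simpa [hXAdef] using this
  have hXAc : XAc ∈ D := by
    have := hdec A hA 0 h0D X hX
    simpa [hXAcdef] using this
  -- I 0 = 0 a.e.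
  have hI0 : ∀ᵐ ω ∂μ, I 0 ω = 0 := by
    obtain ⟨einf, esup, hinf, hsup, hb⟩ := hbdd 0 h0D
    have hs : ∀ᵐ ω ∂μ, esup ω ≤ 0 := by
      refine hsup.2.2 0 measurable_const ?_
      intro Y hY
      simp only [Set.mem_singleton_iff] at hY
      subst hY
      filter_upwards with ω using le_refl _
    have hi : ∀ᵐ ω ∂μ, (0 : EReal) ≤ einf ω := by
      refine hinf.2.2 0 measurable_const ?_
      intro Y hY
      simp only [Set.mem_singleton_iff] at hY
      subst hY
      filter_upwards with ω using le_refl _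
    filter_upwards [hs, hi, hb] with ω h1 h2 h3
    exact le_antisymm (h3.2.trans h1) (h2.trans h3.1)
  -- I XA = 0 off A a.e.
  obtain ⟨einf, esup, hinf, hsup, hb⟩ := hbdd XA hXA
  have hsup0 : ∀ᵐ ω ∂μ, ω ∉ A → esup ω ≤ 0 := by
    have hdom : ∀ Y ∈ ({XA} : Set (Ω → EReal)), ∀ᵐ ω ∂μ,
        Y ω ≤ (fun ω => if ω ∈ A then esup ω else 0) ω := by
      intro Y hY
      simp only [Set.mem_singleton_iff] at hY
      subst hY
      filter_upwards [hsup.2.1 XA rfl] with ω h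
      by_cases hω : ω ∈ A <;> simp [hXAdef, hω] at h ⊢
      exact h
    have := hsup.2.2 _ (Measurable.ite hA hsup.1 measurable_const) hdom
    filter_upwards [this] with ω h hω
    exact h.trans_eq (if_neg hω)
  have hinf0 : ∀ᵐ ω ∂μ, ω ∉ A → (0 : EReal) ≤ einf ω := by
    have hdom : ∀ Y ∈ ({XA} : Set (Ω → EReal)), ∀ᵐ ω ∂μ,
        (fun ω => if ω ∈ A then einf ω else 0) ω ≤ Y ω := by
      intro Y hY
      simp only [Set.mem_singleton_iff] at hY
      subst hY
      filter_upwards [hinf.2.1 XA rfl] with ω h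
      by_cases hω : ω ∈ A <;> simp [hXAdef, hω] at h ⊢
      exact h
    have := hinf.2.2 _ (Measurable.ite hA hinf.1 measurable_const) hdom
    filter_upwards [this] with ω h hω
    exact le_of_eq_of_le (if_neg hω).symm h
  have hIXA0 : ∀ᵐ ω ∂μ, ω ∉ A → I XA ω = 0 := by
    filter_upwards [hsup0, hinf0, hb] with ω h1 h2 h3 hω
    exact le_antisymm (h3.2.trans (h1 hω)) ((h2 hω).trans h3.1)
  -- Step 1: I XA ≤ on A I X
  have key1 : ∀ᵐ ω ∂μ, I XA ω ≤ (α ω : EReal) * I X ω + ((1 - α ω : ℝ) : EReal) * I 0 ω := by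
    have := hconv α hαm hαIcc X hX 0 h0D
    have heq : (fun ω' => (α ω' : EReal) * X ω' + ((1 - α ω' : ℝ) : EReal) * (0 : Ω → EReal) ω')
        = XA := by
      funext ω
      by_cases hω : ω ∈ A <;> simp [hαdef, hXAdef, hω]
    rwa [heq] at this
  -- Step 2: I X ≤ α I XA + (1-α) I XAc
  have key2 : ∀ᵐ ω ∂μ, I X ω ≤ (α ω : EReal) * I XA ω + ((1 - α ω : ℝ) : EReal) * I XAc ω := by
    have := hconv α hαm hαIcc XA hXA XAc hXAc
    have heq : (fun ω' => (α ω' : EReal) * XA ω' + ((1 - α ω' : ℝ) : EReal) * XAc ω') = X := by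
      funext ω
      by_cases hω : ω ∈ A <;> simp [hαdef, hXAdef, hXAcdef, hω]
    rwa [heq] at this
  -- combine
  have hind : A.indicator X = XA := by
    funext ω
    by_cases hω : ω ∈ A <;> simp [hXAdef, hω]
  rw [hind]
  filter_upwards [key1, key2, hIXA0, hI0] with ω h1 h2 h3 h0
  by_cases hω : ω ∈ A
  · have hα1 : α ω = 1 := by simp [hαdef, hω]
    rw [hα1] at h1 h2
    norm_num at h1 h2
    simp [Set.indicator_of_mem hω]
    exact le_antisymm h1 h2
  · have hα0 : α ω = 0 := by simp [hαdef, hω]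
    simp [Set.indicator_of_notMem hω, h3 hω]
end
end

section
/- If a conditional indicator I on an H-decomposable domain is sub-additive, then 1_A·I(X) ≤ I(1_A·X) for all A ∈ H and X in the domain; if moreover I is additive, then I is regular, i.e. I(1_A·X) = 1_A·I(X). -/
open MeasureTheory Filter Set
open scoped ENNReal Classical

noncomputable section

variable {Ω : Type*}

/-! If `X` vanishes off an `H`-measurable set `A`, so do its conditional essential infimum and
supremum: replacing them by `0` off `A` keeps them `H`-measurable bounds. The indicator `I(1_A·X)`
lies between the two, hence also vanishes off `A` (the averaging property). Splitting
`X = 1_A·X + 1_{Aᶜ}·X` and applying sub-additivity (resp. additivity) then gives the claim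
separately on `A` and on `Aᶜ`. -/

section

variable {F : MeasurableSpace Ω} {μ : Measure Ω} {m : MeasurableSpace Ω}
  {Γ : Set (Ω → EReal)} {A : Set Ω}

theorem IsCondSup.ae_nonpos_of_compl {S : Ω → EReal} (hS : IsCondSup μ m Γ S)
    (hA : MeasurableSet[m] A) (hΓ : ∀ Y ∈ Γ, ∀ᵐ ω ∂μ, ω ∉ A → Y ω ≤ 0) :
    ∀ᵐ ω ∂μ, ω ∉ A → S ω ≤ 0 := by
  obtain ⟨hSm, hSle, hSmin⟩ := hS
  have hdom : ∀ Y ∈ Γ, ∀ᵐ ω ∂μ, Y ω ≤ A.piecewise S (fun _ => 0) ω := by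
    intro Y hY
    filter_upwards [hSle Y hY, hΓ Y hY] with ω hYS hY0
    by_cases hω : ω ∈ A <;> simp_all
  filter_upwards [hSmin _ (hSm.piecewise hA measurable_const) hdom] with ω hω hωA
  rwa [Set.piecewise_eq_of_notMem _ _ _ hωA] at hω

theorem IsCondInf.ae_nonneg_of_compl {S : Ω → EReal} (hS : IsCondInf μ m Γ S)
    (hA : MeasurableSet[m] A) (hΓ : ∀ Y ∈ Γ, ∀ᵐ ω ∂μ, ω ∉ A → 0 ≤ Y ω) :
    ∀ᵐ ω ∂μ, ω ∉ A → 0 ≤ S ω := by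
  obtain ⟨hSm, hSle, hSmax⟩ := hS
  have hdom : ∀ Y ∈ Γ, ∀ᵐ ω ∂μ, A.piecewise S (fun _ => 0) ω ≤ Y ω := by
    intro Y hY
    filter_upwards [hSle Y hY, hΓ Y hY] with ω hSY hY0
    by_cases hω : ω ∈ A <;> simp_all
  filter_upwards [hSmax _ (hSm.piecewise hA measurable_const) hdom] with ω hω hωA
  rwa [Set.piecewise_eq_of_notMem _ _ _ hωA] at hω

theorem ae_eq_zero_of_between_condInf_condSup {X : Ω → ℝ} {V : Ω → EReal}
    (hA : MeasurableSet[m] A) (hX : ∀ ω ∉ A, X ω = 0)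
    (hbdd : ∃ einf esup : Ω → EReal,
      IsCondInf μ m {fun ω => (X ω : EReal)} einf ∧
        IsCondSup μ m {fun ω => (X ω : EReal)} esup ∧
        ∀ᵐ ω ∂μ, einf ω ≤ V ω ∧ V ω ≤ esup ω) :
    ∀ᵐ ω ∂μ, ω ∉ A → V ω = 0 := by
  obtain ⟨einf, esup, hinf, hsup, hV⟩ := hbdd
  have hXA : ∀ Y ∈ ({fun ω => (X ω : EReal)} : Set (Ω → EReal)),
      ∀ᵐ ω ∂μ, ω ∉ A → Y ω = 0 := by
    rintro Y rfl
    exact .of_forall fun ω hω => by simp [hX ω hω]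
  have hinf_nonneg := hinf.ae_nonneg_of_compl hA fun Y hY => (hXA Y hY).mono fun _ h hω => (h hω).ge
  have hsup_nonpos := hsup.ae_nonpos_of_compl hA fun Y hY => (hXA Y hY).mono fun _ h hω => (h hω).le
  filter_upwards [hV, hinf_nonneg, hsup_nonpos] with ω ⟨hle, hge⟩ hinf0 hsup0 hω
  exact le_antisymm (hge.trans (hsup0 hω)) ((hinf0 hω).trans hle)

end

section

variable {α β : Type*} [AddZeroClass β] {A : Set α} {f g h : α → β} {a : α}

theorem Set.indicator_apply_eq_of_eq_add (hsum : f a = g a + h a) (hg : a ∉ A → g a = 0)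
    (hh : a ∈ A → h a = 0) : A.indicator f a = g a := by
  by_cases ha : a ∈ A
  · rw [indicator_of_mem ha, hsum, hh ha, add_zero]
  · rw [indicator_of_notMem ha, hg ha]

theorem Set.indicator_apply_le_of_le_add [Preorder β] (hsum : f a ≤ g a + h a)
    (hg : a ∉ A → g a = 0) (hh : a ∈ A → h a = 0) : A.indicator f a ≤ g a := by
  by_cases ha : a ∈ A
  · rwa [indicator_of_mem ha, ← add_zero (g a), ← hh ha]
  · rw [indicator_of_notMem ha, hg ha]

end

theorem subadditive_indicator_regularity_general
    {F : MeasurableSpace Ω} (μ : Measure Ω) (H : MeasurableSpace Ω)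
    (D : Set (Ω → ℝ)) (h0D : (0 : Ω → ℝ) ∈ D)
    (hdec : ∀ A : Set Ω, MeasurableSet[H] A → ∀ X ∈ D, ∀ Y ∈ D,
      (fun ω => if ω ∈ A then X ω else Y ω) ∈ D)
    (I : (Ω → ℝ) → Ω → EReal)
    (hbdd : ∀ X ∈ D, ∃ einf esup : Ω → EReal,
      IsCondInf μ H {fun ω => (X ω : EReal)} einf ∧
        IsCondSup μ H {fun ω => (X ω : EReal)} esup ∧
        ∀ᵐ ω ∂μ, einf ω ≤ I X ω ∧ I X ω ≤ esup ω)
    (hsub : ∀ X ∈ D, ∀ Y ∈ D, X + Y ∈ D →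
      ∀ᵐ ω ∂μ, I (X + Y) ω ≤ I X ω + I Y ω) :
    (∀ X ∈ D, ∀ A : Set Ω, MeasurableSet[H] A →
      ∀ᵐ ω ∂μ, A.indicator (I X) ω ≤ I (A.indicator X) ω) ∧
    ((∀ X ∈ D, ∀ Y ∈ D, X + Y ∈ D →
        I (X + Y) =ᵐ[μ] fun ω => I X ω + I Y ω) →
      ∀ X ∈ D, ∀ A : Set Ω, MeasurableSet[H] A →
        I (A.indicator X) =ᵐ[μ] A.indicator (I X)) := by
  have hmem : ∀ A, MeasurableSet[H] A → ∀ X ∈ D, A.indicator X ∈ D :=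
    fun A hA X hX => hdec A hA X hX 0 h0D
  have havg : ∀ A, MeasurableSet[H] A → ∀ X ∈ D,
      ∀ᵐ ω ∂μ, ω ∉ A → I (A.indicator X) ω = 0 :=
    fun A hA X hX => ae_eq_zero_of_between_condInf_condSup hA
      (fun _ hω => indicator_of_notMem hω X) (hbdd _ (hmem A hA X hX))
  have hsplit : ∀ X ∈ D, ∀ A, MeasurableSet[H] A →
      A.indicator X ∈ D ∧ Aᶜ.indicator X ∈ D ∧ A.indicator X + Aᶜ.indicator X ∈ D :=
    fun X hX A hA => ⟨hmem A hA X hX, hmem Aᶜ hA.compl X hX,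
      (indicator_self_add_compl A X).symm ▸ hX⟩
  refine ⟨fun X hX A hA => ?_, fun hadd X hX A hA => ?_⟩
  · obtain ⟨h1, h2, h12⟩ := hsplit X hX A hA
    filter_upwards [hsub _ h1 _ h2 h12, havg A hA X hX, havg Aᶜ hA.compl X hX]
      with ω hle hA0 hAc0
    rw [indicator_self_add_compl] at hle
    exact indicator_apply_le_of_le_add hle hA0 fun hω => hAc0 (not_not_intro hω)
  · obtain ⟨h1, h2, h12⟩ := hsplit X hX A hA
    filter_upwards [hadd _ h1 _ h2 h12, havg A hA X hX, havg Aᶜ hA.compl X hX]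
      with ω heq hA0 hAc0
    rw [indicator_self_add_compl] at heq
    exact (indicator_apply_eq_of_eq_add heq hA0 fun hω => hAc0 (not_not_intro hω)).symm

/-- If a conditional indicator `I` on an `H`-decomposable domain of real-valued
random variables is sub-additive, then `1_A·I(X) ≤ I(1_A·X)` a.e. for all `A ∈ H`;
if moreover `I` is additive, then `I` is regular: `I(1_A·X) = 1_A·I(X)` a.e. -/
theorem subadditive_indicator_regularity
    {F : MeasurableSpace Ω} (μ : Measure Ω) (H : MeasurableSpace Ω) (hH : H ≤ F)
    (D : Set (Ω → ℝ)) (h0D : (0 : Ω → ℝ) ∈ D)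
    (hDstable : ∀ X ∈ D, ∀ Z : Ω → ℝ, Measurable[H] Z → X + Z ∈ D)
    (hdec : ∀ A : Set Ω, MeasurableSet[H] A → ∀ X ∈ D, ∀ Y ∈ D,
      (fun ω => if ω ∈ A then X ω else Y ω) ∈ D)
    (I : (Ω → ℝ) → Ω → EReal)
    (hmeasI : ∀ X ∈ D, Measurable[H] (I X))
    (hbdd : ∀ X ∈ D, ∃ einf esup : Ω → EReal,
      IsCondInf μ H {fun ω => (X ω : EReal)} einf ∧
        IsCondSup μ H {fun ω => (X ω : EReal)} esup ∧
        ∀ᵐ ω ∂μ, einf ω ≤ I X ω ∧ I X ω ≤ esup ω)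
    (hsub : ∀ X ∈ D, ∀ Y ∈ D, X + Y ∈ D →
      ∀ᵐ ω ∂μ, I (X + Y) ω ≤ I X ω + I Y ω) :
    (∀ X ∈ D, ∀ A : Set Ω, MeasurableSet[H] A →
      ∀ᵐ ω ∂μ, A.indicator (I X) ω ≤ I (A.indicator X) ω) ∧
    ((∀ X ∈ D, ∀ Y ∈ D, X + Y ∈ D →
        I (X + Y) =ᵐ[μ] fun ω => I X ω + I Y ω) →
      ∀ X ∈ D, ∀ A : Set Ω, MeasurableSet[H] A →
        I (A.indicator X) =ᵐ[μ] A.indicator (I X)) :=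
  subadditive_indicator_regularity_general (F := F) μ H D h0D hdec I hbdd hsub
end
end

section
/- If I is a monotone and regular conditional indicator and I^L(X) = esssup_H{I(Y) : Y ∈ D_I, Y ≤ X}, then I^L is regular: I^L(X·1_A) = I^L(X)·1_A for all A ∈ H and all X ∈ L^0(ℝ̄,F). -/
open MeasureTheory Filter Set
open scoped ENNReal Classical

noncomputable section

variable {Ω : Type*}

/-!
Regularity of `I^L` follows from two facts. First, `I^L` is local on sets `B ∈ H`: if `X ≤ X'`
on `B` then `I^L X ≤ I^L X'` on `B`. Indeed, a competitor `Y ≤ X` may be replaced by the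
truncation equal to `Y` on `B` and to `⊥` off `B`; it lies in `D_I` (it is `Y` plus an
`H`-measurable function), it is a competitor for `X'`, and by regularity of `I` its `I`-value
agrees with `I Y` on `B`. Second, `I^L 0 = 0`: regularity with `A = ∅` gives `I 0 = 0`,
and monotonicity bounds every competitor for `0` by `I 0`.
-/

variable {F : MeasurableSpace Ω} {μ : Measure Ω} {H : MeasurableSpace Ω}
  {D : Set (Ω → EReal)} {I : (Ω → EReal) → Ω → EReal}

def lowerFamily (μ : Measure Ω) (D : Set (Ω → EReal)) (I : (Ω → EReal) → Ω → EReal)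
    (X : Ω → EReal) : Set (Ω → EReal) :=
  {Z | ∃ Y ∈ D, (∀ᵐ ω ∂μ, Y ω ≤ X ω) ∧ Z = I Y}

lemma piecewise_bot_mem
    (hDstable : ∀ X ∈ D, ∀ Z : Ω → EReal, Measurable[H] Z → X + Z ∈ D)
    {Y : Ω → EReal} (hY : Y ∈ D) {B : Set Ω} (hB : MeasurableSet[H] B) :
    B.piecewise Y (fun _ => ⊥) ∈ D := by
  have hsum : B.piecewise Y (fun _ => ⊥) = Y + Bᶜ.indicator (fun _ => ⊥) := by
    ext ω
    by_cases hω : ω ∈ B <;> simp [hω]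
  rw [hsum]
  exact hDstable Y hY _ (measurable_const.indicator hB.compl)

lemma ae_eq_on_of_eqOn
    (hreg : ∀ X ∈ D, ∀ A : Set Ω, MeasurableSet[H] A →
      I (A.indicator X) =ᵐ[μ] A.indicator (I X))
    {X Y : Ω → EReal} (hX : X ∈ D) (hY : Y ∈ D) {B : Set Ω} (hB : MeasurableSet[H] B)
    (hXY : EqOn X Y B) : ∀ᵐ ω ∂μ, ω ∈ B → I X ω = I Y ω := by
  filter_upwards [hreg X hX B hB, hreg Y hY B hB] with ω hXω hYω hω
  rw [← indicator_of_mem hω (I X), ← indicator_of_mem hω (I Y), ← hXω, ← hYω,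
    indicator_congr hXY]

lemma apply_zero_ae_eq_zero
    (hreg : ∀ X ∈ D, ∀ A : Set Ω, MeasurableSet[H] A →
      I (A.indicator X) =ᵐ[μ] A.indicator (I X))
    (h0 : (0 : Ω → EReal) ∈ D) : I 0 =ᵐ[μ] 0 := by
  have h := hreg 0 h0 ∅ MeasurableSet.empty
  simp only [indicator_empty] at h
  exact h

lemma IsCondSup.lowerFamily_ae_le_on
    (hDstable : ∀ X ∈ D, ∀ Z : Ω → EReal, Measurable[H] Z → X + Z ∈ D)
    (hreg : ∀ X ∈ D, ∀ A : Set Ω, MeasurableSet[H] A →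
      I (A.indicator X) =ᵐ[μ] A.indicator (I X))
    {X X' S S' : Ω → EReal} (hS : IsCondSup μ H (lowerFamily μ D I X) S)
    (hS' : IsCondSup μ H (lowerFamily μ D I X') S') {B : Set Ω} (hB : MeasurableSet[H] B)
    (hXX' : ∀ᵐ ω ∂μ, ω ∈ B → X ω ≤ X' ω) : ∀ᵐ ω ∂μ, ω ∈ B → S ω ≤ S' ω := by
  have hST : ∀ᵐ ω ∂μ, S ω ≤ B.piecewise S' (fun _ => ⊤) ω := by
    refine hS.2.2 _ (hS'.1.piecewise hB measurable_const) ?_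
    rintro _ ⟨Y, hY, hYX, rfl⟩
    set Y' := B.piecewise Y (fun _ => ⊥)
    have hY' : Y' ∈ D := piecewise_bot_mem hDstable hY hB
    have hY'X' : ∀ᵐ ω ∂μ, Y' ω ≤ X' ω := by
      filter_upwards [hYX, hXX'] with ω hYXω hXX'ω
      by_cases hω : ω ∈ B
      · simpa [Y', hω] using hYXω.trans (hXX'ω hω)
      · simp [Y', hω]
    filter_upwards [hS'.2.1 _ ⟨Y', hY', hY'X', rfl⟩,
      ae_eq_on_of_eqOn hreg hY hY' hB (piecewise_eqOn B Y _).symm] with ω hY'S' hYY'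
    by_cases hω : ω ∈ B
    · simpa [hω, hYY' hω] using hY'S'
    · simp [hω]
  filter_upwards [hST] with ω h hω
  simpa [hω] using h

lemma IsCondSup.lowerFamily_congr_on
    (hDstable : ∀ X ∈ D, ∀ Z : Ω → EReal, Measurable[H] Z → X + Z ∈ D)
    (hreg : ∀ X ∈ D, ∀ A : Set Ω, MeasurableSet[H] A →
      I (A.indicator X) =ᵐ[μ] A.indicator (I X))
    {X X' S S' : Ω → EReal} (hS : IsCondSup μ H (lowerFamily μ D I X) S)
    (hS' : IsCondSup μ H (lowerFamily μ D I X') S') {B : Set Ω} (hB : MeasurableSet[H] B)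
    (hXX' : EqOn X X' B) : ∀ᵐ ω ∂μ, ω ∈ B → S ω = S' ω := by
  filter_upwards [hS.lowerFamily_ae_le_on hDstable hreg hS' hB
      (ae_of_all _ fun ω hω => (hXX' hω).le),
    hS'.lowerFamily_ae_le_on hDstable hreg hS hB
      (ae_of_all _ fun ω hω => (hXX' hω).ge)] with ω hle hge hω
  exact le_antisymm (hle hω) (hge hω)

lemma IsCondSup.lowerFamily_zero
    (hmono : ∀ X ∈ D, ∀ Y ∈ D, (∀ᵐ ω ∂μ, X ω ≤ Y ω) → ∀ᵐ ω ∂μ, I X ω ≤ I Y ω)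
    (hreg : ∀ X ∈ D, ∀ A : Set Ω, MeasurableSet[H] A →
      I (A.indicator X) =ᵐ[μ] A.indicator (I X))
    (h0 : (0 : Ω → EReal) ∈ D) {S : Ω → EReal} (hS : IsCondSup μ H (lowerFamily μ D I 0) S) :
    S =ᵐ[μ] 0 := by
  have hI0 := apply_zero_ae_eq_zero hreg h0
  have hle : ∀ᵐ ω ∂μ, S ω ≤ 0 := by
    refine hS.2.2 0 measurable_const ?_
    rintro _ ⟨Y, hY, hY0, rfl⟩
    filter_upwards [hmono Y hY 0 h0 hY0, hI0] with ω hYω h0ω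
    simpa [h0ω] using hYω
  have hge : ∀ᵐ ω ∂μ, 0 ≤ S ω := by
    filter_upwards [hS.2.1 _ ⟨0, h0, ae_of_all _ fun _ => le_rfl, rfl⟩, hI0] with ω hS0 h0ω
    simpa [h0ω] using hS0
  filter_upwards [hle, hge] with ω hleω hgeω
  exact le_antisymm hleω hgeω

theorem lower_extension_regular_general
    {F : MeasurableSpace Ω} (μ : Measure Ω) (H : MeasurableSpace Ω)
    (D : Set (Ω → EReal))
    (hDstable : ∀ X ∈ D, ∀ Z : Ω → EReal, Measurable[H] Z → X + Z ∈ D)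
    (hHD : ∀ Z : Ω → EReal, Measurable[H] Z → Z ∈ D)
    (I : (Ω → EReal) → Ω → EReal)
    (hmono : ∀ X ∈ D, ∀ Y ∈ D, (∀ᵐ ω ∂μ, X ω ≤ Y ω) → ∀ᵐ ω ∂μ, I X ω ≤ I Y ω)
    (hreg : ∀ X ∈ D, ∀ A : Set Ω, MeasurableSet[H] A →
      I (A.indicator X) =ᵐ[μ] A.indicator (I X))
    (IL : (Ω → EReal) → Ω → EReal)
    (hIL : ∀ X : Ω → EReal,
      IsCondSup μ H {Z | ∃ Y ∈ D, (∀ᵐ ω ∂μ, Y ω ≤ X ω) ∧ Z = I Y} (IL X))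
    (X : Ω → EReal) (A : Set Ω) (hA : MeasurableSet[H] A) :
    IL (A.indicator X) =ᵐ[μ] A.indicator (IL X) := by
  have hIL0 : IL 0 =ᵐ[μ] 0 := (hIL 0).lowerFamily_zero hmono hreg (hHD 0 measurable_const)
  have on_A := (hIL (A.indicator X)).lowerFamily_congr_on hDstable hreg (hIL X) hA
    fun _ hω => indicator_of_mem hω X
  have on_compl := (hIL (A.indicator X)).lowerFamily_congr_on hDstable hreg (hIL 0) hA.compl
    fun _ hω => indicator_of_notMem hω X
  filter_upwards [on_A, on_compl, hIL0] with ω hAω hAcω hIL0ω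
  by_cases hω : ω ∈ A
  · rw [indicator_of_mem hω, hAω hω]
  · rw [indicator_of_notMem hω, hAcω hω, hIL0ω, Pi.zero_apply]

/-- If `I` is a monotone and regular conditional indicator and
`I^L(X) = esssup_H {I(Y) : Y ∈ D_I, Y ≤ X}`, then `I^L` is regular:
`I^L(X·1_A) = I^L(X)·1_A` a.e. for all `A ∈ H` and all `X`. -/
theorem lower_extension_regular
    {F : MeasurableSpace Ω} (μ : Measure Ω) (H : MeasurableSpace Ω) (hH : H ≤ F)
    (D : Set (Ω → EReal))
    (hDstable : ∀ X ∈ D, ∀ Z : Ω → EReal, Measurable[H] Z → X + Z ∈ D)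
    (hHD : ∀ Z : Ω → EReal, Measurable[H] Z → Z ∈ D)
    (hdec : ∀ A : Set Ω, MeasurableSet[H] A → ∀ X ∈ D, ∀ Y ∈ D,
      (fun ω => if ω ∈ A then X ω else Y ω) ∈ D)
    (I : (Ω → EReal) → Ω → EReal)
    (hmeasI : ∀ X ∈ D, Measurable[H] (I X))
    (hbdd : ∀ X ∈ D, ∃ einf esup : Ω → EReal,
      IsCondInf μ H {X} einf ∧ IsCondSup μ H {X} esup ∧
        ∀ᵐ ω ∂μ, einf ω ≤ I X ω ∧ I X ω ≤ esup ω)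
    (hmono : ∀ X ∈ D, ∀ Y ∈ D, (∀ᵐ ω ∂μ, X ω ≤ Y ω) → ∀ᵐ ω ∂μ, I X ω ≤ I Y ω)
    (hreg : ∀ X ∈ D, ∀ A : Set Ω, MeasurableSet[H] A →
      I (A.indicator X) =ᵐ[μ] A.indicator (I X))
    (IL : (Ω → EReal) → Ω → EReal)
    (hIL : ∀ X : Ω → EReal,
      IsCondSup μ H {Z | ∃ Y ∈ D, (∀ᵐ ω ∂μ, Y ω ≤ X ω) ∧ Z = I Y} (IL X))
    (X : Ω → EReal) (A : Set Ω) (hA : MeasurableSet[H] A) :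
    IL (A.indicator X) =ᵐ[μ] A.indicator (IL X) :=
  lower_extension_regular_general (F := F) μ H D hDstable hHD I hmono hreg IL hIL X A hA
end
end

section
/- Uniqueness of the projection: let (I_t) be a stochastic indicator such that I_0 is super-additive and I_0(Y) ≤ 0 implies Y = 0 for all F_T-measurable Y ≥ 0. If Z_t and I_t(X) are F_t-measurable and both satisfy the projection equality I_0(X·1_{F}) = I_0(Z·1_{F}) for all F ∈ F_t, then Z_t = I_t(X) a.s. -/
/-!
On `A = {W < Z, |W| ≤ n} ∈ F_t` the value `I₀(1_A W)` is finite, since it lies between the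
conditional essential infimum and supremum of a bounded variable. Super-additivity and the two
projection equalities give `I₀(1_A W) + I₀(1_A (Z - W)) ≤ I₀(1_A Z) = I₀(1_A W)`, hence
`I₀(1_A (Z - W)) ≤ 0`, and positive definiteness forces `1_A (Z - W) = 0`, i.e. `A` is null.
Letting `n → ∞` gives `Z ≤ W` a.e., and exchanging `Z` and `W` gives equality.
-/

open MeasureTheory Filter Set
open scoped ENNReal Classical

noncomputable section

variable {Ω : Type*}

def IsBetweenCondInfSup {F : MeasurableSpace Ω} (μ : Measure Ω) (m : MeasurableSpace Ω)
    (X : Ω → ℝ) (V : Ω → EReal) : Prop :=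
  ∃ einf esup : Ω → EReal,
    IsCondInf μ m {fun ω => (X ω : EReal)} einf ∧
      IsCondSup μ m {fun ω => (X ω : EReal)} esup ∧
      ∀ᵐ ω ∂μ, einf ω ≤ V ω ∧ V ω ≤ esup ω

theorem EReal.add_le_iff_nonpos_right {a b : EReal} (ha : a ≠ ⊥) (ha' : a ≠ ⊤) :
    a + b ≤ a ↔ b ≤ 0 := by
  lift a to ℝ using ⟨ha', ha⟩
  exact ⟨fun h => (EReal.addLECancellable_coe a) (by rwa [add_zero]), add_le_of_nonpos_right⟩

section CondBounds

variable {F : MeasurableSpace Ω} {μ : Measure Ω} {m : MeasurableSpace Ω}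
  {Γ : Set (Ω → EReal)} {S : Ω → EReal} {c : EReal}

theorem IsCondSup.ae_le_of_forall_ae_le (h : IsCondSup μ m Γ S)
    (hc : ∀ Y ∈ Γ, ∀ᵐ ω ∂μ, Y ω ≤ c) : ∀ᵐ ω ∂μ, S ω ≤ c :=
  h.2.2 (fun _ => c) measurable_const hc

theorem IsCondInf.ae_le_of_forall_ae_le (h : IsCondInf μ m Γ S)
    (hc : ∀ Y ∈ Γ, ∀ᵐ ω ∂μ, c ≤ Y ω) : ∀ᵐ ω ∂μ, c ≤ S ω :=
  h.2.2 (fun _ => c) measurable_const hc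

theorem ae_ne_bot_and_ne_top_of_abs_le {X : Ω → ℝ} {r : ℝ} (hX : ∀ ω, |X ω| ≤ r)
    {V : Ω → EReal} (hV : IsBetweenCondInfSup μ m X V) :
    ∀ᵐ ω ∂μ, V ω ≠ ⊥ ∧ V ω ≠ ⊤ := by
  obtain ⟨einf, esup, hinf, hsup, hV⟩ := hV
  have hlow : ∀ᵐ ω ∂μ, ((-r : ℝ) : EReal) ≤ einf ω := by
    refine hinf.ae_le_of_forall_ae_le ?_
    rintro _ rfl
    exact ae_of_all _ fun ω => EReal.coe_le_coe_iff.2 (abs_le.1 (hX ω)).1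
  have hupp : ∀ᵐ ω ∂μ, esup ω ≤ (r : EReal) := by
    refine hsup.ae_le_of_forall_ae_le ?_
    rintro _ rfl
    exact ae_of_all _ fun ω => EReal.coe_le_coe_iff.2 (abs_le.1 (hX ω)).2
  filter_upwards [hlow, hupp, hV] with ω hl hu ⟨hVl, hVu⟩
  exact ⟨ne_bot_of_le_ne_bot (EReal.coe_ne_bot _) (hl.trans hVl),
    ne_top_of_le_ne_top (EReal.coe_ne_top _) (hVu.trans hu)⟩

end CondBounds

section Projection

variable {F : MeasurableSpace Ω} {μ : Measure Ω} {m mt : MeasurableSpace Ω}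
  {I0 : (Ω → ℝ) → Ω → EReal}

theorem ae_indicator_sub_nonpos_of_indicator_ae_eq
    (hbdd : ∀ X : Ω → ℝ, IsBetweenCondInfSup μ m X (I0 X))
    (hsuper : ∀ X Y : Ω → ℝ, ∀ᵐ ω ∂μ, I0 X ω + I0 Y ω ≤ I0 (X + Y) ω)
    {Z W : Ω → ℝ} {A : Set Ω} {r : ℝ} (hWr : ∀ ω, |A.indicator W ω| ≤ r)
    (hZW : I0 (A.indicator Z) =ᵐ[μ] I0 (A.indicator W)) :
    ∀ᵐ ω ∂μ, I0 (A.indicator (Z - W)) ω ≤ 0 := by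
  have hsplit : A.indicator W + A.indicator (Z - W) = A.indicator Z := by
    rw [← indicator_add', add_sub_cancel]
  have hsuperA := hsuper (A.indicator W) (A.indicator (Z - W))
  rw [hsplit] at hsuperA
  filter_upwards [hsuperA, hZW, ae_ne_bot_and_ne_top_of_abs_le hWr (hbdd _)]
    with ω hs heq ⟨hbot, htop⟩
  exact (EReal.add_le_iff_nonpos_right hbot htop).1 (heq ▸ hs)

theorem ae_notMem_of_indicator_ae_eq
    (hbdd : ∀ X : Ω → ℝ, IsBetweenCondInfSup μ m X (I0 X))
    (hsuper : ∀ X Y : Ω → ℝ, ∀ᵐ ω ∂μ, I0 X ω + I0 Y ω ≤ I0 (X + Y) ω)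
    (hposdef : ∀ Y : Ω → ℝ, Measurable[mt] Y → (∀ᵐ ω ∂μ, 0 ≤ Y ω) →
      (∀ᵐ ω ∂μ, I0 Y ω ≤ 0) → Y =ᵐ[μ] 0)
    {Z W : Ω → ℝ} (hZ : Measurable[mt] Z) (hW : Measurable[mt] W)
    {A : Set Ω} (hA : MeasurableSet[mt] A) (hWZ : ∀ ω ∈ A, W ω < Z ω) {r : ℝ}
    (hWr : ∀ ω, |A.indicator W ω| ≤ r)
    (hZW : I0 (A.indicator Z) =ᵐ[μ] I0 (A.indicator W)) :
    ∀ᵐ ω ∂μ, ω ∉ A := by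
  have hnonneg : ∀ ω, 0 ≤ A.indicator (Z - W) ω :=
    indicator_nonneg fun ω hω => sub_nonneg.2 (hWZ ω hω).le
  have hzero := hposdef _ ((hZ.sub hW).indicator hA) (ae_of_all _ hnonneg)
    (ae_indicator_sub_nonpos_of_indicator_ae_eq hbdd hsuper hWr hZW)
  filter_upwards [hzero] with ω h0 hω
  rw [indicator_of_mem hω, Pi.sub_apply, Pi.zero_apply, sub_eq_zero] at h0
  exact (hWZ ω hω).ne' h0

theorem ae_le_of_forall_indicator_ae_eq
    (hbdd : ∀ X : Ω → ℝ, IsBetweenCondInfSup μ m X (I0 X))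
    (hsuper : ∀ X Y : Ω → ℝ, ∀ᵐ ω ∂μ, I0 X ω + I0 Y ω ≤ I0 (X + Y) ω)
    (hposdef : ∀ Y : Ω → ℝ, Measurable[mt] Y → (∀ᵐ ω ∂μ, 0 ≤ Y ω) →
      (∀ᵐ ω ∂μ, I0 Y ω ≤ 0) → Y =ᵐ[μ] 0)
    {Z W : Ω → ℝ} (hZ : Measurable[mt] Z) (hW : Measurable[mt] W)
    (hZW : ∀ A : Set Ω, MeasurableSet[mt] A →
      I0 (A.indicator Z) =ᵐ[μ] I0 (A.indicator W)) :
    ∀ᵐ ω ∂μ, Z ω ≤ W ω := by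
  let A : ℕ → Set Ω := fun n => {ω | W ω < Z ω ∧ |W ω| ≤ n}
  have hA : ∀ n, MeasurableSet[mt] (A n) := fun n =>
    (measurableSet_lt hW hZ).inter (hW.abs measurableSet_Iic)
  have hWA : ∀ n ω, |(A n).indicator W ω| ≤ n := fun n ω => by
    by_cases hω : ω ∈ A n
    · simpa [indicator_of_mem hω] using hω.2
    · simp [indicator_of_notMem hω]
  have hnull : ∀ n, ∀ᵐ ω ∂μ, ω ∉ A n := fun n =>
    ae_notMem_of_indicator_ae_eq hbdd hsuper hposdef hZ hW (hA n) (fun _ hω => hω.1)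
      (hWA n) (hZW _ (hA n))
  filter_upwards [ae_all_iff.2 hnull] with ω hω
  by_contra hlt
  obtain ⟨n, hn⟩ := exists_nat_ge |W ω|
  exact hω n ⟨lt_of_not_ge hlt, hn⟩

end Projection

theorem projection_uniqueness_general
    {F : MeasurableSpace Ω} (μ : Measure Ω)
    (F0 Ft : MeasurableSpace Ω)
    (I0 : (Ω → ℝ) → Ω → EReal)
    (hbdd : ∀ X : Ω → ℝ, ∃ einf esup : Ω → EReal,
      IsCondInf μ F0 {fun ω => (X ω : EReal)} einf ∧
        IsCondSup μ F0 {fun ω => (X ω : EReal)} esup ∧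
        ∀ᵐ ω ∂μ, einf ω ≤ I0 X ω ∧ I0 X ω ≤ esup ω)
    (hsuper : ∀ X Y : Ω → ℝ, ∀ᵐ ω ∂μ, I0 X ω + I0 Y ω ≤ I0 (X + Y) ω)
    (hposdef : ∀ Y : Ω → ℝ, Measurable Y → (∀ᵐ ω ∂μ, 0 ≤ Y ω) →
      ((∀ᵐ ω ∂μ, I0 Y ω ≤ 0) ↔ Y =ᵐ[μ] 0))
    (X : Ω → ℝ)
    (Z : Ω → ℝ) (hZ : Measurable[Ft] Z)
    (W : Ω → ℝ) (hW : Measurable[Ft] W)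
    (hprojZ : ∀ A : Set Ω, MeasurableSet[Ft] A →
      I0 (A.indicator X) =ᵐ[μ] I0 (A.indicator Z))
    (hprojW : ∀ A : Set Ω, MeasurableSet[Ft] A →
      I0 (A.indicator X) =ᵐ[μ] I0 (A.indicator W)) :
    Z =ᵐ[μ] W := by
  -- `Measurable Y` in `hposdef` elaborates with the most recent local instance, `Ft`.
  have hpos : ∀ Y : Ω → ℝ, Measurable[Ft] Y → (∀ᵐ ω ∂μ, 0 ≤ Y ω) →
      (∀ᵐ ω ∂μ, I0 Y ω ≤ 0) → Y =ᵐ[μ] 0 :=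
    fun Y hY h0 => (hposdef Y hY h0).1
  have hZW : ∀ A : Set Ω, MeasurableSet[Ft] A →
      I0 (A.indicator Z) =ᵐ[μ] I0 (A.indicator W) :=
    fun A hA => (hprojZ A hA).symm.trans (hprojW A hA)
  have hZleW := ae_le_of_forall_indicator_ae_eq hbdd hsuper hpos hZ hW hZW
  have hWleZ := ae_le_of_forall_indicator_ae_eq hbdd hsuper hpos hW hZ
    fun A hA => (hZW A hA).symm
  filter_upwards [hZleW, hWleZ] with ω h₁ h₂
  exact le_antisymm h₁ h₂

/-- Uniqueness of the projection: if `I₀` is super-additive,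
`I₀(Y) ≤ 0 ⟹ Y = 0` for nonnegative `Y`, and two `F_t`-measurable random variables `Z` and
`W` (the latter playing the role of `I_t(X)`) both satisfy the projection equality
`I₀(X·1_F) = I₀(Z·1_F)` for all `F ∈ F_t`, then `Z = W` a.e. -/
theorem projection_uniqueness
    {F : MeasurableSpace Ω} (μ : Measure Ω)
    (F0 Ft : MeasurableSpace Ω) (h0t : F0 ≤ Ft) (htF : Ft ≤ F)
    (I0 : (Ω → ℝ) → Ω → EReal)
    (hmeasI0 : ∀ X : Ω → ℝ, Measurable[F0] (I0 X))
    (hbdd : ∀ X : Ω → ℝ, ∃ einf esup : Ω → EReal,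
      IsCondInf μ F0 {fun ω => (X ω : EReal)} einf ∧
        IsCondSup μ F0 {fun ω => (X ω : EReal)} esup ∧
        ∀ᵐ ω ∂μ, einf ω ≤ I0 X ω ∧ I0 X ω ≤ esup ω)
    (hsuper : ∀ X Y : Ω → ℝ, ∀ᵐ ω ∂μ, I0 X ω + I0 Y ω ≤ I0 (X + Y) ω)
    (hposdef : ∀ Y : Ω → ℝ, Measurable Y → (∀ᵐ ω ∂μ, 0 ≤ Y ω) →
      ((∀ᵐ ω ∂μ, I0 Y ω ≤ 0) ↔ Y =ᵐ[μ] 0))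
    (X : Ω → ℝ) (hX : Measurable X)
    (Z : Ω → ℝ) (hZ : Measurable[Ft] Z)
    (W : Ω → ℝ) (hW : Measurable[Ft] W)
    (hprojZ : ∀ A : Set Ω, MeasurableSet[Ft] A →
      I0 (A.indicator X) =ᵐ[μ] I0 (A.indicator Z))
    (hprojW : ∀ A : Set Ω, MeasurableSet[Ft] A →
      I0 (A.indicator X) =ᵐ[μ] I0 (A.indicator W)) :
    Z =ᵐ[μ] W :=
  projection_uniqueness_general (F := F) μ F0 Ft I0 hbdd hsuper hposdef X Z hZ W hW hprojZ hprojW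
end
end

section
/- Non-uniqueness of the projection for the essential supremum in general: on Ω = ℝ with the Cauchy-type density dP/dx = α/(1+x²), with X = 0, Z(ω) = −exp(ω), A = {Z ≤ −1} and F_1 = σ(1_A), the random variable Z_1 = esssup_{F_1}(Z) = −1_A satisfies esssup_{F_0}(Z_1·1_F) = 0 = esssup_{F_0}(X·1_F) for every F ∈ F_1, yet Z_1 ≠ 0 on a set of positive measure. -/
open MeasureTheory Filter Set
open scoped ENNReal Classical

noncomputable section

variable {Ω : Type*}

private lemma classify_gen {A s : Set ℝ}
    (hs : MeasurableSet[MeasurableSpace.generateFrom {A}] s) :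
    s = ∅ ∨ s = A ∨ s = Aᶜ ∨ s = Set.univ := by
  refine MeasurableSpace.generateFrom_induction (C := {A})
    (p := fun s _ => s = ∅ ∨ s = A ∨ s = Aᶜ ∨ s = Set.univ) ?_ ?_ ?_ ?_ s hs
  · intro t ht _; rw [mem_singleton_iff] at ht; exact Or.inr (Or.inl ht)
  · exact Or.inl rfl
  · rintro t _ (rfl | rfl | rfl | rfl)
    · exact Or.inr (Or.inr (Or.inr (by simp)))
    · exact Or.inr (Or.inr (Or.inl rfl))
    · exact Or.inr (Or.inl (compl_compl A))
    · exact Or.inl (by simp)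
  · intro f _ ih
    by_cases hu : ∃ n, f n = Set.univ
    · obtain ⟨n, hn⟩ := hu
      exact Or.inr (Or.inr (Or.inr (eq_univ_of_univ_subset (hn ▸ subset_iUnion f n))))
    by_cases hA : ∃ n, f n = A
    · by_cases hAc : ∃ n, f n = Aᶜ
      · refine Or.inr (Or.inr (Or.inr (eq_univ_of_univ_subset ?_)))
        obtain ⟨n, hn⟩ := hA; obtain ⟨m, hm⟩ := hAc
        rw [← union_compl_self A]
        exact union_subset (hn ▸ subset_iUnion f n) (hm ▸ subset_iUnion f m)
      · refine Or.inr (Or.inl (subset_antisymm (iUnion_subset fun i => ?_) ?_))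
        · rcases ih i with h | h | h | h
          · simp [h]
          · exact h ▸ subset_rfl
          · exact absurd ⟨i, h⟩ hAc
          · exact absurd ⟨i, h⟩ hu
        · obtain ⟨n, hn⟩ := hA
          exact hn ▸ subset_iUnion f n
    · by_cases hAc : ∃ n, f n = Aᶜ
      · refine Or.inr (Or.inr (Or.inl (subset_antisymm (iUnion_subset fun i => ?_) ?_)))
        · rcases ih i with h | h | h | h
          · simp [h]
          · exact absurd ⟨i, h⟩ hA
          · exact h ▸ subset_rfl
          · exact absurd ⟨i, h⟩ hu
        · obtain ⟨n, hn⟩ := hAc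
          exact hn ▸ subset_iUnion f n
      · refine Or.inl (iUnion_eq_empty.mpr fun i => ?_)
        rcases ih i with h | h | h | h
        · exact h
        · exact absurd ⟨i, h⟩ hA
        · exact absurd ⟨i, h⟩ hAc
        · exact absurd ⟨i, h⟩ hu

private lemma const_of_meas {A : Set ℝ} {T : ℝ → EReal}
    (hT : Measurable[MeasurableSpace.generateFrom {A}] T)
    {ω₀ ω₁ : ℝ} (h : ω₁ ∈ A ↔ ω₀ ∈ A) : T ω₁ = T ω₀ := by
  have hs : MeasurableSet[MeasurableSpace.generateFrom {A}] (T ⁻¹' {T ω₀}) :=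
    hT (measurableSet_singleton _)
  have h₀ : ω₀ ∈ T ⁻¹' {T ω₀} := rfl
  rcases classify_gen hs with he | hA | hAc | hu
  · exact absurd (he ▸ h₀) (notMem_empty _)
  · have h₁ : ω₁ ∈ T ⁻¹' {T ω₀} := by rw [hA] at h₀ ⊢; exact h.mpr h₀
    exact h₁
  · have h₁ : ω₁ ∈ T ⁻¹' {T ω₀} := by
      rw [hAc] at h₀ ⊢
      exact fun hc => h₀ (h.mp hc)
    exact h₁
  · have h₁ : ω₁ ∈ T ⁻¹' {T ω₀} := by rw [hu]; trivial
    exact h₁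

private lemma essSup_eq_zero' {μ : Measure ℝ} {f : ℝ → EReal} {s : Set ℝ}
    (hle : ∀ ω, f ω ≤ 0) (h0 : ∀ ω ∈ s, f ω = 0) (hpos : μ s ≠ 0) :
    essSup f μ = 0 := by
  refine le_antisymm (essSup_le_of_ae_le 0 (ae_of_all _ hle)) (not_lt.mp fun hlt => ?_)
  have hae : ∀ᵐ ω ∂μ, f ω < 0 := ae_lt_of_essSup_lt hlt
  rw [ae_iff] at hae
  refine hpos (measure_mono_null (fun ω hω => ?_) hae)
  simp only [mem_setOf_eq, not_lt, h0 ω hω, le_refl]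

open Real in
/-- Non-uniqueness of the projection for the essential supremum: on `ℝ` with the
Cauchy-type density `dP/dx = π⁻¹/(1+x²)`, with `X = 0`, `Z(ω) = −exp ω`, `A = {Z ≤ −1}` and
`F₁ = σ(A)`, the variable `Z₁ = esssup_{F₁}(Z) = −1_A` satisfies
`esssup(Z₁·1_F) = 0 = esssup(X·1_F)` for every `F ∈ F₁`, yet `Z₁ ≠ 0` on a set of positive
measure. -/
theorem esssup_projection_not_unique :
    let μ : Measure ℝ := MeasureTheory.volume.withDensity
      (fun x => ENNReal.ofReal (π⁻¹ * (1 + x ^ 2)⁻¹))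
    let Z : ℝ → ℝ := fun ω => - Real.exp ω
    let A : Set ℝ := {ω | Z ω ≤ -1}
    let F1 : MeasurableSpace ℝ := MeasurableSpace.generateFrom {A}
    let Z1 : ℝ → ℝ := fun ω => if ω ∈ A then -1 else 0
    -- Z₁ is the conditional essential supremum of Z given F₁
    IsCondSup μ F1 {fun ω => (Z ω : EReal)} (fun ω => (Z1 ω : EReal)) ∧
    -- projection equality: esssup(Z₁·1_F) = 0 = esssup(0·1_F) for all F ∈ F₁
    (∀ Fs : Set ℝ, MeasurableSet[F1] Fs →
      essSup (fun ω => ((Fs.indicator Z1 ω : ℝ) : EReal)) μ = 0 ∧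
        essSup (fun ω => ((Fs.indicator (fun _ => (0 : ℝ)) ω : ℝ) : EReal)) μ = 0) ∧
    -- yet Z₁ is non-zero on a set of positive measure
    0 < μ {ω | Z1 ω ≠ 0} := by
  intro μ Z A F1 Z1
  have hA : A = Set.Ici (0:ℝ) := by
    ext ω
    simp only [A, Z, mem_setOf_eq, mem_Ici, neg_le_neg_iff, Real.one_le_exp_iff]
  have hmeas : Measurable[Real.measurableSpace]
      fun x : ℝ => ENNReal.ofReal (π⁻¹ * (1 + x ^ 2)⁻¹) := by
    fun_prop
  have hvac : volume ≪ μ :=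
    withDensity_absolutelyContinuous' hmeas.aemeasurable
      (ae_of_all _ fun x => ne_of_gt (ENNReal.ofReal_pos.mpr (by positivity)))
  have hpos : ∀ s : Set ℝ, volume s ≠ 0 → μ s ≠ 0 := fun s hv hμ => hv (hvac hμ)
  have hAmeas : MeasurableSet[F1] A :=
    MeasurableSpace.measurableSet_generateFrom (mem_singleton A)
  have hIio : μ (Set.Iio (0:ℝ)) ≠ 0 := hpos _ (by simp [Real.volume_Iio])
  have hZ1zero : ∀ ω ∈ Set.Iio (0:ℝ), Z1 ω = 0 := by
    intro ω hω
    rw [mem_Iio] at hω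
    simp only [Z1, hA, mem_Ici, if_neg (not_le.mpr hω)]
  refine ⟨⟨?_, ?_, ?_⟩, ?_, ?_⟩
  · -- measurability of Z1
    have heq : (fun ω => ((Z1 ω : ℝ) : EReal))
        = fun ω => if ω ∈ A then ((-1:ℝ) : EReal) else ((0:ℝ) : EReal) := by
      funext ω
      simp only [Z1]
      split <;> rfl
    rw [heq]
    exact Measurable.ite hAmeas measurable_const measurable_const
  · -- a.e. domination
    intro Y hY
    rw [mem_singleton_iff] at hY
    subst hY
    refine ae_of_all _ fun ω => ?_
    simp only [EReal.coe_le_coe_iff, Z1]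
    by_cases h : ω ∈ A
    · rw [if_pos h]; exact h
    · rw [if_neg h]
      simp only [Z, neg_nonpos]
      exact (Real.exp_pos ω).le
  · -- minimality
    intro T hTm hTle
    have hae : ∀ᵐ ω ∂μ, (Z ω : EReal) ≤ T ω := hTle _ (mem_singleton _)
    have haev : ∀ᵐ ω ∂volume, (Z ω : EReal) ≤ T ω := hae.filter_mono hvac.ae_le
    rw [ae_iff] at haev
    have hc : ((-1:ℝ) : EReal) ≤ T 0 := by
      by_contra hcon
      obtain ⟨r, hr1, hr2⟩ := EReal.exists_between_coe_real (not_le.mp hcon)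
      rw [EReal.coe_lt_coe_iff] at hr2
      have hδ : 0 < Real.log (-r) := Real.log_pos (by linarith)
      have hsub : Set.Ico (0:ℝ) (Real.log (-r)) ⊆ {ω | ¬ ((Z ω : EReal) ≤ T ω)} := by
        rintro ω ⟨hω0, hωδ⟩ hcontra
        have hTω : T ω = T 0 := const_of_meas hTm (by simp [hA, mem_Ici, hω0])
        rw [hTω] at hcontra
        have : ((Z ω : ℝ) : EReal) < (r : EReal) := lt_of_le_of_lt hcontra hr1
        rw [EReal.coe_lt_coe_iff] at this
        have hexp : -r < Real.exp ω := by simp only [Z] at this; linarith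
        exact absurd ((Real.log_lt_iff_lt_exp (by linarith)).mpr hexp) (not_lt.mpr hωδ.le)
      have := measure_mono_null hsub haev
      rw [Real.volume_Ico, ENNReal.ofReal_eq_zero] at this
      linarith
    have hd : ((0:ℝ) : EReal) ≤ T (-1) := by
      by_contra hcon
      obtain ⟨r, hr1, hr2⟩ := EReal.exists_between_coe_real (not_le.mp hcon)
      rw [EReal.coe_lt_coe_iff] at hr2
      set δ : ℝ := min (Real.log (-r)) 0 with hδdef
      have hsub : Set.Ioo (δ - 1) δ
          ⊆ {ω | ¬ ((Z ω : EReal) ≤ T ω)} := by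
        rintro ω ⟨hω0, hωδ⟩ hcontra
        have hωneg : ω < 0 := lt_of_lt_of_le hωδ (min_le_right _ _)
        have hωlog : ω < Real.log (-r) := lt_of_lt_of_le hωδ (min_le_left _ _)
        have hTω : T ω = T (-1) := by
          refine const_of_meas hTm ?_
          simp only [hA, mem_Ici]
          constructor
          · intro h; linarith
          · intro h; linarith
        rw [hTω] at hcontra
        have : ((Z ω : ℝ) : EReal) < (r : EReal) := lt_of_le_of_lt hcontra hr1
        rw [EReal.coe_lt_coe_iff] at this
        have hexp : -r < Real.exp ω := by simp only [Z] at this; linarith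
        exact absurd ((Real.log_lt_iff_lt_exp (by linarith)).mpr hexp) (not_lt.mpr hωlog.le)
      have := measure_mono_null hsub haev
      rw [Real.volume_Ioo, ENNReal.ofReal_eq_zero] at this
      linarith
    refine ae_of_all _ fun ω => ?_
    by_cases h : ω ∈ A
    · have hTω : T ω = T 0 := const_of_meas hTm (by simp [hA, mem_Ici] at h ⊢; exact h)
      rw [hTω]
      simp only [Z1, if_pos h]
      exact hc
    · have hωneg : ω < 0 := by
        rw [hA, mem_Ici, not_le] at h
        exact h
      have hTω : T ω = T (-1) := by
        refine const_of_meas hTm ?_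
        simp only [hA, mem_Ici]
        constructor
        · intro hh; linarith
        · intro hh; linarith
      rw [hTω]
      simp only [Z1, if_neg h]
      exact hd
  · -- projection equalities
    intro Fs _
    constructor
    · refine essSup_eq_zero' (s := Set.Iio 0) (fun ω => ?_) (fun ω hω => ?_) hIio
      · rw [← EReal.coe_zero, EReal.coe_le_coe_iff]
        by_cases h : ω ∈ Fs
        · rw [indicator_of_mem h]
          simp only [Z1]
          split <;> norm_num
        · rw [indicator_of_notMem h]
      · rw [← EReal.coe_zero, EReal.coe_eq_coe_iff]
        by_cases h : ω ∈ Fs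
        · rw [indicator_of_mem h]
          exact hZ1zero ω hω
        · rw [indicator_of_notMem h]
    · refine essSup_eq_zero' (s := Set.Iio 0) (fun ω => ?_) (fun ω hω => ?_) hIio
      · rw [← EReal.coe_zero, EReal.coe_le_coe_iff]
        by_cases h : ω ∈ Fs
        · rw [indicator_of_mem h]
        · rw [indicator_of_notMem h]
      · rw [← EReal.coe_zero, EReal.coe_eq_coe_iff]
        by_cases h : ω ∈ Fs
        · rw [indicator_of_mem h]
        · rw [indicator_of_notMem h]
  · -- positive measure
    have hset : {ω | Z1 ω ≠ 0} = A := by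
      ext ω
      simp only [Z1, mem_setOf_eq]
      by_cases h : ω ∈ A <;> simp [h]
    rw [hset, hA]
    exact pos_iff_ne_zero.mpr (hpos _ (by simp [Real.volume_Ici]))
end
end

section
/- Restricted additivity of the extended conditional expectation: with I(X) = E(X⁺|H) − E(X⁻|H), for X, Y ∈ L^0(ℝ,F) one has I(X+Y) = I(X) + I(Y) a.s. on the H-measurable set F = F₁ ∪ F₂ ∪ F₃ ∪ F₄ ∪ F₅, where F₁ = {E(|X||H) < ∞ and E(|Y||H) < ∞}, F₂ = {E(X⁺|H)=∞, E(X⁻|H)<∞, E(Y⁻|H)<∞}, F₃ = {E(X⁻|H)=∞, E(X⁺|H)<∞, E(Y⁺|H)<∞}, F₄ = {E(Y⁺|H)=∞, E(X⁻|H)<∞, E(Y⁻|H)<∞}, F₅ = {E(Y⁻|H)=∞, E(X⁺|H)<∞, E(Y⁺|H)<∞}. -/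
open MeasureTheory Filter Set
open scoped ENNReal Classical

noncomputable section

variable {Ω : Type*}

/-- `g` is (a version of) the conditional expectation of the nonnegative random variable `f`
given the sub-σ-algebra `m`. -/
def IsCondExpNN {F : MeasurableSpace Ω} (μ : Measure Ω) (m : MeasurableSpace Ω)
    (f g : Ω → ℝ≥0∞) : Prop :=
  Measurable[m] g ∧ ∀ A : Set Ω, MeasurableSet[m] A →
    ∫⁻ ω in A, g ω ∂μ = ∫⁻ ω in A, f ω ∂μ

/-- The extended conditional expectation `E(X⁺|H) − E(X⁻|H)` with convention `∞ − ∞ = 0`. -/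
def extCE (gp gm : Ω → ℝ≥0∞) : Ω → EReal := fun ω =>
  if gp ω = ⊤ ∧ gm ω = ⊤ then 0 else (gp ω : EReal) - (gm ω : EReal)


section AuxLemmas

lemma ereal_coe_toReal' (x : ℝ≥0∞) (hx : x ≠ ⊤) : ((x.toReal : ℝ) : EReal) = (x : EReal) := by
  rw [← EReal.toReal_coe_ennreal]
  exact EReal.coe_toReal (by simpa [EReal.coe_ennreal_eq_top_iff] using hx)
    (EReal.coe_ennreal_ne_bot x)

lemma ereal_sub_ne_bot' (x y : ℝ≥0∞) (hy : y ≠ ⊤) : (x : EReal) - y ≠ ⊥ := by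
  rw [← ereal_coe_toReal' y hy]
  by_cases hx : x = ⊤
  · subst hx; rw [EReal.coe_ennreal_top, EReal.top_sub_coe]; simp
  · rw [← ereal_coe_toReal' x hx, ← EReal.coe_sub]; exact EReal.coe_ne_bot _

lemma extCE_pointwise' (s t a b c d : ℝ≥0∞)
    (h1 : s ≤ a + c) (h2 : t ≤ b + d) (h3 : a ≤ s + d) (h4 : b ≤ t + c)
    (h5 : c ≤ s + b) (h6 : d ≤ t + a) (h7 : s + b + d = t + a + c)
    (hmem : (a ≠ ⊤ ∧ b ≠ ⊤ ∧ c ≠ ⊤ ∧ d ≠ ⊤) ∨ (a = ⊤ ∧ b ≠ ⊤ ∧ d ≠ ⊤) ∨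
      (b = ⊤ ∧ a ≠ ⊤ ∧ c ≠ ⊤) ∨ (c = ⊤ ∧ b ≠ ⊤ ∧ d ≠ ⊤) ∨ (d = ⊤ ∧ a ≠ ⊤ ∧ c ≠ ⊤)) :
    (if s = ⊤ ∧ t = ⊤ then 0 else (s : EReal) - t)
      = (if a = ⊤ ∧ b = ⊤ then 0 else (a : EReal) - b)
        + (if c = ⊤ ∧ d = ⊤ then 0 else (c : EReal) - d) := by
  rcases hmem with ⟨ha, hb, hc, hd⟩ | ⟨ha, hb, hd⟩ | ⟨hb, ha, hc⟩ | ⟨hc, hb, hd⟩ | ⟨hd, ha, hc⟩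
  · have hs : s ≠ ⊤ := ne_top_of_le_ne_top (by finiteness) h1
    have ht : t ≠ ⊤ := ne_top_of_le_ne_top (by finiteness) h2
    rw [if_neg (by tauto), if_neg (by tauto), if_neg (by tauto)]
    rw [← ereal_coe_toReal' s hs, ← ereal_coe_toReal' t ht, ← ereal_coe_toReal' a ha,
      ← ereal_coe_toReal' b hb, ← ereal_coe_toReal' c hc, ← ereal_coe_toReal' d hd,
      ← EReal.coe_sub, ← EReal.coe_sub, ← EReal.coe_sub, ← EReal.coe_add, EReal.coe_eq_coe_iff]
    have h7' := congrArg ENNReal.toReal h7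
    rw [ENNReal.toReal_add (by finiteness) hd, ENNReal.toReal_add hs hb,
      ENNReal.toReal_add (by finiteness) hc, ENNReal.toReal_add ht ha] at h7'
    linarith
  · have ht : t ≠ ⊤ := ne_top_of_le_ne_top (by finiteness) h2
    have hs : s = ⊤ := by
      rcases (ENNReal.add_eq_top.1 (top_le_iff.1 (ha ▸ h3))) with h | h
      · exact h
      · exact absurd h hd
    rw [if_neg (by tauto), if_neg (by tauto), if_neg (by tauto), hs, ha,
      EReal.coe_ennreal_top, ← ereal_coe_toReal' t ht, ← ereal_coe_toReal' b hb,
      EReal.top_sub_coe, EReal.top_sub_coe,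
      EReal.top_add_of_ne_bot (ereal_sub_ne_bot' c d hd)]
  · have hs : s ≠ ⊤ := ne_top_of_le_ne_top (by finiteness) h1
    have ht : t = ⊤ := by
      rcases (ENNReal.add_eq_top.1 (top_le_iff.1 (hb ▸ h4))) with h | h
      · exact h
      · exact absurd h hc
    rw [if_neg (by tauto), if_neg (by tauto), if_neg (by tauto), ht, hb,
      EReal.coe_ennreal_top, EReal.sub_top, EReal.sub_top, EReal.bot_add]
  · have ht : t ≠ ⊤ := ne_top_of_le_ne_top (by finiteness) h2
    have hs : s = ⊤ := by
      rcases (ENNReal.add_eq_top.1 (top_le_iff.1 (hc ▸ h5))) with h | h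
      · exact h
      · exact absurd h hb
    rw [if_neg (by tauto), if_neg (by tauto), if_neg (by tauto), hs, hc,
      EReal.coe_ennreal_top, ← ereal_coe_toReal' t ht, ← ereal_coe_toReal' d hd,
      EReal.top_sub_coe, EReal.top_sub_coe,
      EReal.add_top_of_ne_bot (ereal_sub_ne_bot' a b hb)]
  · have hs : s ≠ ⊤ := ne_top_of_le_ne_top (by finiteness) h1
    have ht : t = ⊤ := by
      rcases (ENNReal.add_eq_top.1 (top_le_iff.1 (hd ▸ h6))) with h | h
      · exact h
      · exact absurd h ha
    rw [if_neg (by tauto), if_neg (by tauto), if_neg (by tauto), ht, hd,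
      EReal.coe_ennreal_top, EReal.sub_top, EReal.sub_top, EReal.add_bot]

lemma ofReal_identity' (a b : ℝ) :
    ENNReal.ofReal (a + b) + ENNReal.ofReal (-a) + ENNReal.ofReal (-b)
      = ENNReal.ofReal (-(a + b)) + ENNReal.ofReal a + ENNReal.ofReal b := by
  simp only [ENNReal.ofReal, ← ENNReal.coe_add, ENNReal.coe_inj]
  rw [← NNReal.coe_inj]
  push_cast
  simp only [Real.coe_toNNReal', max_def]
  split_ifs <;> linarith

lemma ae_le_of_H_setLIntegral_le {F H : MeasurableSpace Ω} (hH : H ≤ F)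
    (μ : @MeasureTheory.Measure Ω F) [IsFiniteMeasure μ] {f g : Ω → ℝ≥0∞}
    (hf : Measurable[H] f) (hg : Measurable[H] g)
    (h : ∀ A : Set Ω, MeasurableSet[H] A →
      ∫⁻ ω in A, f ω ∂μ ≤ ∫⁻ ω in A, g ω ∂μ) : f ≤ᵐ[μ] g := by
  have htrim : f ≤ᵐ[μ.trim hH] g := by
    refine ae_le_of_forall_setLIntegral_le_of_sigmaFinite hf fun s hs _ => ?_
    rw [restrict_trim hH μ hs, lintegral_trim hH hf, lintegral_trim hH hg]
    exact h s hs
  exact ae_le_of_ae_le_trim htrim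

lemma condexpNN_le_add {F H : MeasurableSpace Ω} (hH : H ≤ F)
    (μ : @MeasureTheory.Measure Ω F) [IsFiniteMeasure μ] {f₁ f₂ f₃ g₁ g₂ g₃ : Ω → ℝ≥0∞}
    (hf₂ : Measurable[F] f₂)
    (h1 : IsCondExpNN μ H f₁ g₁) (h2 : IsCondExpNN μ H f₂ g₂) (h3 : IsCondExpNN μ H f₃ g₃)
    (hle : ∀ ω, f₁ ω ≤ f₂ ω + f₃ ω) :
    ∀ᵐ ω ∂μ, g₁ ω ≤ g₂ ω + g₃ ω := by
  refine ae_le_of_H_setLIntegral_le hH μ h1.1 (h2.1.add h3.1) fun A hA => ?_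
  rw [h1.2 A hA]
  calc ∫⁻ ω in A, f₁ ω ∂μ ≤ ∫⁻ ω in A, (f₂ ω + f₃ ω) ∂μ := lintegral_mono hle
    _ = ∫⁻ ω in A, f₂ ω ∂μ + ∫⁻ ω in A, f₃ ω ∂μ := lintegral_add_left hf₂ _
    _ = ∫⁻ ω in A, g₂ ω ∂μ + ∫⁻ ω in A, g₃ ω ∂μ := by rw [h2.2 A hA, h3.2 A hA]
    _ = ∫⁻ ω in A, (g₂ ω + g₃ ω) ∂μ := (lintegral_add_left (h2.1.mono hH le_rfl) _).symm

lemma condexpNN_triple_eq {F H : MeasurableSpace Ω} (hH : H ≤ F)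
    (μ : @MeasureTheory.Measure Ω F) [IsFiniteMeasure μ] {f₁ f₂ f₃ f₄ f₅ f₆ : Ω → ℝ≥0∞}
    {g₁ g₂ g₃ g₄ g₅ g₆ : Ω → ℝ≥0∞}
    (hf₁ : Measurable[F] f₁) (hf₂ : Measurable[F] f₂) (hf₄ : Measurable[F] f₄)
    (hf₅ : Measurable[F] f₅)
    (h1 : IsCondExpNN μ H f₁ g₁) (h2 : IsCondExpNN μ H f₂ g₂) (h3 : IsCondExpNN μ H f₃ g₃)
    (h4 : IsCondExpNN μ H f₄ g₄) (h5 : IsCondExpNN μ H f₅ g₅) (h6 : IsCondExpNN μ H f₆ g₆)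
    (heq : ∀ ω, f₁ ω + f₂ ω + f₃ ω = f₄ ω + f₅ ω + f₆ ω) :
    ∀ᵐ ω ∂μ, g₁ ω + g₂ ω + g₃ ω = g₄ ω + g₅ ω + g₆ ω := by
  have key : ∀ A : Set Ω, MeasurableSet[H] A →
      ∫⁻ ω in A, (g₁ ω + g₂ ω + g₃ ω) ∂μ = ∫⁻ ω in A, (g₄ ω + g₅ ω + g₆ ω) ∂μ := by
    intro A hA
    have m1 := h1.1.mono hH le_rfl
    have m2 := h2.1.mono hH le_rfl
    have m4 := h4.1.mono hH le_rfl
    have m5 := h5.1.mono hH le_rfl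
    calc ∫⁻ ω in A, (g₁ ω + g₂ ω + g₃ ω) ∂μ
        = (∫⁻ ω in A, (g₁ ω + g₂ ω) ∂μ) + ∫⁻ ω in A, g₃ ω ∂μ :=
          lintegral_add_left (m1.add m2) _
      _ = (∫⁻ ω in A, g₁ ω ∂μ) + (∫⁻ ω in A, g₂ ω ∂μ) + ∫⁻ ω in A, g₃ ω ∂μ := by
          rw [lintegral_add_left m1]
      _ = (∫⁻ ω in A, f₁ ω ∂μ) + (∫⁻ ω in A, f₂ ω ∂μ) + ∫⁻ ω in A, f₃ ω ∂μ := by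
          rw [h1.2 A hA, h2.2 A hA, h3.2 A hA]
      _ = (∫⁻ ω in A, (f₁ ω + f₂ ω) ∂μ) + ∫⁻ ω in A, f₃ ω ∂μ := by
          rw [lintegral_add_left hf₁]
      _ = ∫⁻ ω in A, (f₁ ω + f₂ ω + f₃ ω) ∂μ := (lintegral_add_left (hf₁.add hf₂) _).symm
      _ = ∫⁻ ω in A, (f₄ ω + f₅ ω + f₆ ω) ∂μ := lintegral_congr heq
      _ = (∫⁻ ω in A, (f₄ ω + f₅ ω) ∂μ) + ∫⁻ ω in A, f₆ ω ∂μ :=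
          lintegral_add_left (hf₄.add hf₅) _
      _ = (∫⁻ ω in A, f₄ ω ∂μ) + (∫⁻ ω in A, f₅ ω ∂μ) + ∫⁻ ω in A, f₆ ω ∂μ := by
          rw [lintegral_add_left hf₄]
      _ = (∫⁻ ω in A, g₄ ω ∂μ) + (∫⁻ ω in A, g₅ ω ∂μ) + ∫⁻ ω in A, g₆ ω ∂μ := by
          rw [h4.2 A hA, h5.2 A hA, h6.2 A hA]
      _ = (∫⁻ ω in A, (g₄ ω + g₅ ω) ∂μ) + ∫⁻ ω in A, g₆ ω ∂μ := by
          rw [lintegral_add_left m4]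
      _ = ∫⁻ ω in A, (g₄ ω + g₅ ω + g₆ ω) ∂μ := (lintegral_add_left (m4.add m5) _).symm
  have hle₁ : (fun ω => g₁ ω + g₂ ω + g₃ ω) ≤ᵐ[μ] (fun ω => g₄ ω + g₅ ω + g₆ ω) :=
    ae_le_of_H_setLIntegral_le hH μ ((h1.1.add h2.1).add h3.1) ((h4.1.add h5.1).add h6.1)
      fun A hA => (key A hA).le
  have hle₂ : (fun ω => g₄ ω + g₅ ω + g₆ ω) ≤ᵐ[μ] (fun ω => g₁ ω + g₂ ω + g₃ ω) :=
    ae_le_of_H_setLIntegral_le hH μ ((h4.1.add h5.1).add h6.1) ((h1.1.add h2.1).add h3.1)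
      fun A hA => (key A hA).ge
  filter_upwards [hle₁, hle₂] with ω hω₁ hω₂ using le_antisymm hω₁ hω₂

end AuxLemmas

/-- Restricted additivity of the extended conditional expectation:
`I(X+Y) = I(X) + I(Y)` a.e. on the `H`-measurable set `F₁ ∪ F₂ ∪ F₃ ∪ F₄ ∪ F₅`. -/
theorem extended_condexp_restricted_additivity
    (H : MeasurableSpace Ω) {F : MeasurableSpace Ω} (μ : Measure Ω) [IsProbabilityMeasure μ]
    (hH : H ≤ F)
    (X Y : Ω → ℝ) (hX : Measurable X) (hY : Measurable Y)
    (gp gm hp hm sp sm : Ω → ℝ≥0∞)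
    (hgp : IsCondExpNN μ H (fun ω => ENNReal.ofReal (X ω)) gp)
    (hgm : IsCondExpNN μ H (fun ω => ENNReal.ofReal (-X ω)) gm)
    (hhp : IsCondExpNN μ H (fun ω => ENNReal.ofReal (Y ω)) hp)
    (hhm : IsCondExpNN μ H (fun ω => ENNReal.ofReal (-Y ω)) hm)
    (hsp : IsCondExpNN μ H (fun ω => ENNReal.ofReal (X ω + Y ω)) sp)
    (hsm : IsCondExpNN μ H (fun ω => ENNReal.ofReal (-(X ω + Y ω))) sm) :
    ∀ᵐ ω ∂μ,
      ω ∈ ({ω | gp ω ≠ ⊤ ∧ gm ω ≠ ⊤ ∧ hp ω ≠ ⊤ ∧ hm ω ≠ ⊤} ∪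
            {ω | gp ω = ⊤ ∧ gm ω ≠ ⊤ ∧ hm ω ≠ ⊤} ∪
            {ω | gm ω = ⊤ ∧ gp ω ≠ ⊤ ∧ hp ω ≠ ⊤} ∪
            {ω | hp ω = ⊤ ∧ gm ω ≠ ⊤ ∧ hm ω ≠ ⊤} ∪
            {ω | hm ω = ⊤ ∧ gp ω ≠ ⊤ ∧ hp ω ≠ ⊤} : Set Ω) →
        extCE sp sm ω = extCE gp gm ω + extCE hp hm ω := by
  have mXp : Measurable[F] fun ω => ENNReal.ofReal (X ω) := (hX.ennreal_ofReal)
  have mXm : Measurable[F] fun ω => ENNReal.ofReal (-X ω) := (hX.neg.ennreal_ofReal)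
  have mYp : Measurable[F] fun ω => ENNReal.ofReal (Y ω) := (hY.ennreal_ofReal)
  have mYm : Measurable[F] fun ω => ENNReal.ofReal (-Y ω) := (hY.neg.ennreal_ofReal)
  have mSp : Measurable[F] fun ω => ENNReal.ofReal (X ω + Y ω) := ((hX.add hY).ennreal_ofReal)
  have mSm : Measurable[F] fun ω => ENNReal.ofReal (-(X ω + Y ω)) :=
    ((hX.add hY).neg.ennreal_ofReal)
  have h1 : ∀ᵐ ω ∂μ, sp ω ≤ gp ω + hp ω :=
    condexpNN_le_add hH μ mXp hsp hgp hhp fun ω => ENNReal.ofReal_add_le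
  have h2 : ∀ᵐ ω ∂μ, sm ω ≤ gm ω + hm ω := by
    refine condexpNN_le_add hH μ mXm hsm hgm hhm fun ω => ?_
    have : -(X ω + Y ω) = -X ω + -Y ω := by ring
    rw [this]; exact ENNReal.ofReal_add_le
  have h3 : ∀ᵐ ω ∂μ, gp ω ≤ sp ω + hm ω := by
    refine condexpNN_le_add hH μ mSp hgp hsp hhm fun ω => ?_
    have : X ω = (X ω + Y ω) + (-Y ω) := by ring
    nth_rewrite 1 [this]; exact ENNReal.ofReal_add_le
  have h4 : ∀ᵐ ω ∂μ, gm ω ≤ sm ω + hp ω := by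
    refine condexpNN_le_add hH μ mSm hgm hsm hhp fun ω => ?_
    have : -X ω = -(X ω + Y ω) + Y ω := by ring
    nth_rewrite 1 [this]; exact ENNReal.ofReal_add_le
  have h5 : ∀ᵐ ω ∂μ, hp ω ≤ sp ω + gm ω := by
    refine condexpNN_le_add hH μ mSp hhp hsp hgm fun ω => ?_
    have : Y ω = (X ω + Y ω) + (-X ω) := by ring
    nth_rewrite 1 [this]; exact ENNReal.ofReal_add_le
  have h6 : ∀ᵐ ω ∂μ, hm ω ≤ sm ω + gp ω := by
    refine condexpNN_le_add hH μ mSm hhm hsm hgp fun ω => ?_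
    have : -Y ω = -(X ω + Y ω) + X ω := by ring
    nth_rewrite 1 [this]; exact ENNReal.ofReal_add_le
  have h7 : ∀ᵐ ω ∂μ, sp ω + gm ω + hm ω = sm ω + gp ω + hp ω :=
    condexpNN_triple_eq hH μ mSp mXm mSm mXp hsp hgm hhm hsm hgp hhp
      fun ω => ofReal_identity' (X ω) (Y ω)
  filter_upwards [h1, h2, h3, h4, h5, h6, h7] with ω hw1 hw2 hw3 hw4 hw5 hw6 hw7 hmem
  simp only [Set.mem_union, Set.mem_setOf_eq] at hmem
  simp only [extCE]
  exact extCE_pointwise' (sp ω) (sm ω) (gp ω) (gm ω) (hp ω) (hm ω)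
    hw1 hw2 hw3 hw4 hw5 hw6 hw7 (by tauto)
end
end
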